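/- Let p,t∈ℂ* with |p|<1, let r≥1, n≥1, μ∈Z_{r,n}, let a=(a_1,…,a_r)∈(ℂ*)^r be generic (all denominators in the definition of E_μ nonzero, both for a and for the p-shifted parameters), and let w=(w_1,…,w_{r-1})∈(ℂ*)^{r-1}. Define F_μ(a;w;p)=∏_{k=1}^r ∏_{l=1}^{r-1} e(a_k, w_l; p)_{μ_k} and f_μ(z;w;p)=E_μ(a_1,…,a_r; z; p)·F_μ(a;w;p). Then for every k∈{1,…,r} and every z∈(ℂ*)^n, replacing a_k by p·a_k leaves f_μ(z;w;p) unchanged: f_μ evaluated with parameters (a_1,…,p·a_k,…,a_r) equals f_μ evaluated with parameters (a_1,…,a_r). -/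

import Mathlib

open scoped BigOperators Topology
open Finset MeasureTheory

noncomputable section

/-- `(u;p)_∞ = ∏_{i≥0} (1 - p^i u)`. -/
def poch (u p : ℂ) : ℂ := ∏' i : ℕ, (1 - p ^ i * u)

/-- `(u;p,q)_∞ = ∏_{i,j≥0} (1 - p^i q^j u)`. -/
def poch2 (u p q : ℂ) : ℂ := ∏' ij : ℕ × ℕ, (1 - p ^ ij.1 * q ^ ij.2 * u)

/-- The multiplicative theta function `θ(u;p)`. -/
def theta (u p : ℂ) : ℂ := poch u p * poch (p / u) p

/-- The elliptic gamma function `Γ(u;p,q)`. -/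
def ellGamma (u p q : ℂ) : ℂ := poch2 (p * q / u) p q / poch2 u p q

/-- `e(u,v;p) = u⁻¹ θ(uv;p) θ(u/v;p)`. -/
def efun (p t u v : ℂ) : ℂ := u⁻¹ * theta (u * v) p * theta (u / v) p

/-- `θ(u;p)_{t,k}`. -/
def thetaFac (p t u : ℂ) (k : ℕ) : ℂ := ∏ j ∈ Finset.range k, theta (t ^ j * u) p

/-- `e(u,v;p)_{t,k}`. -/
def efunFac (p t u v : ℂ) (k : ℕ) : ℂ := ∏ j ∈ Finset.range k, efun p t (t ^ j * u) v

/-- The number of indices `j < i` with `k j = l`. -/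
def cnt {n s : ℕ} (k : Fin n → Fin s) (i : ℕ) (l : Fin s) : ℕ :=
  (Finset.univ.filter (fun j : Fin n => (j : ℕ) < i ∧ k j = l)).card

/-- The elliptic interpolation function `E_μ(c;z;p)` of type `BC_n`. -/
def interpE (p t : ℂ) {s n : ℕ} (c : Fin s → ℂ) (z : Fin n → ℂ) (μ : Fin s → ℕ) : ℂ :=
  ∑ k : Fin n → Fin s,
    if ∀ l, cnt k n l = μ l then
      ∏ i : Fin n, ∏ l ∈ Finset.univ.filter (fun l => l ≠ k i),
        efun p t (z i) (t ^ cnt k ((i : ℕ) + 1) l * c l) /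
          efun p t (t ^ cnt k (i : ℕ) (k i) * c (k i)) (t ^ cnt k (i : ℕ) l * c l)
    else 0

/-- `Z_{s,n}`, the multi-indices `μ ∈ ℕ^s` with `|μ| = n`. -/
abbrev Zidx (s n : ℕ) := {μ : Fin s → ℕ // ∑ i, μ i = n}

instance (s n : ℕ) : Fintype (Zidx s n) :=
  Fintype.subtype (Finset.Nat.antidiagonalTuple s n)
    (fun μ => Finset.Nat.mem_antidiagonalTuple)

/-- The `BC_n` elliptic hypergeometric kernel `Φ(z;a;p,q)`. -/
def PhiBC (p q t : ℂ) {n m : ℕ} (a : Fin m → ℂ) (z : Fin n → ℂ) : ℂ :=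
  (∏ i, (∏ k, ellGamma (a k * z i) p q * ellGamma (a k * (z i)⁻¹) p q) /
      (ellGamma (z i ^ 2) p q * ellGamma ((z i)⁻¹ ^ 2) p q)) *
  ∏ i, ∏ j ∈ Finset.univ.filter (fun j => i < j),
    (ellGamma (t * (z i * z j)) p q * ellGamma (t * (z i / z j)) p q *
        ellGamma (t * (z j / z i)) p q * ellGamma (t / (z i * z j)) p q) /
      (ellGamma (z i * z j) p q * ellGamma (z i / z j) p q *
        ellGamma (z j / z i) p q * ellGamma ((z i * z j)⁻¹) p q)

/-- `∫_{T^n} f(z) ω_n(z)` where `ω_n(z) = dz/((2πi)^n z₁⋯z_n)`. -/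
def torusInt (n : ℕ) (f : (Fin n → ℂ) → ℂ) : ℂ :=
  (1 / (2 * (Real.pi : ℂ))) ^ n *
    ∫ θ : Fin n → ℝ in Set.univ.pi fun _ : Fin n => Set.Icc (0 : ℝ) (2 * Real.pi),
      f fun i => Complex.exp (Complex.I * (θ i : ℂ))

/-!
Theta is quasi-periodic, `θ(pu) = -u⁻¹ θ(u)`, hence `e(pu,v) = (pu²)⁻¹ e(u,v)` and
`e(u,pv) = (pv²)⁻¹ e(u,v)`. Replace `a_k` by `p a_k` in a summand of `E_μ`. In step `i`, a factor
with `l = k ≠ k_i` is a ratio of two `e`'s with the same shifted second argument (as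
`μ^{(i)}_k = μ^{(i-1)}_k`), so it does not change. The `r - 1` factors of a step with `k_i = k`
each gain `p (t^{μ^{(i-1)}_k} a_k)²`, and over the steps with `k_i = k` the exponent
`μ^{(i-1)}_k` runs through `0, …, μ_k - 1`. So `E_μ` gains `(∏_{j<μ_k} p (t^j a_k)²)^{r-1}`,
which is exactly the factor by which `F_μ` is divided.
-/

lemma multipliable_poch {p : ℂ} (hp : ‖p‖ < 1) (u : ℂ) :
    Multipliable fun i : ℕ => 1 - p ^ i * u := by
  have hsum : Summable fun i : ℕ => -(p ^ i * u) :=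
    ((summable_geometric_of_norm_lt_one hp).mul_right u).neg
  simpa only [← sub_eq_add_neg] using Complex.multipliable_one_add_of_summable hsum

lemma poch_eq_one_sub_mul {p : ℂ} (hp : ‖p‖ < 1) (u : ℂ) :
    poch u p = (1 - u) * poch (p * u) p := by
  have hshift : (fun i : ℕ => 1 - p ^ (i + 1) * u) = fun i => 1 - p ^ i * (p * u) := by
    ext i
    ring
  rw [poch, tprod_eq_zero_mul' (f := fun i : ℕ => 1 - p ^ i * u)
    (hshift ▸ multipliable_poch hp (p * u)), hshift, pow_zero, one_mul, poch]

lemma theta_mul_left {p : ℂ} (hp0 : p ≠ 0) (hp : ‖p‖ < 1) {u : ℂ} (hu : u ≠ 0) :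
    theta (p * u) p = -u⁻¹ * theta u p := by
  rw [theta, theta, div_mul_cancel_left₀ hp0, poch_eq_one_sub_mul hp u,
    poch_eq_one_sub_mul hp u⁻¹, ← div_eq_mul_inv]
  field_simp
  ring

lemma theta_div_left {p : ℂ} (hp0 : p ≠ 0) (hp : ‖p‖ < 1) {u : ℂ} (hu : u ≠ 0) :
    theta (u / p) p = -(u / p) * theta u p := by
  have h := theta_mul_left hp0 hp (div_ne_zero hu hp0)
  rw [mul_div_cancel₀ u hp0] at h
  rw [h]
  field_simp

lemma efun_mul_left {p t : ℂ} (hp0 : p ≠ 0) (hp : ‖p‖ < 1) {u v : ℂ} (hu : u ≠ 0)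
    (hv : v ≠ 0) : efun p t (p * u) v = (p * u ^ 2)⁻¹ * efun p t u v := by
  rw [efun, efun, mul_assoc p u v, mul_div_assoc, theta_mul_left hp0 hp (mul_ne_zero hu hv),
    theta_mul_left hp0 hp (div_ne_zero hu hv)]
  field_simp

lemma efun_mul_right {p t : ℂ} (hp0 : p ≠ 0) (hp : ‖p‖ < 1) {u v : ℂ} (hu : u ≠ 0)
    (hv : v ≠ 0) : efun p t u (p * v) = (p * v ^ 2)⁻¹ * efun p t u v := by
  rw [efun, efun, mul_left_comm, theta_mul_left hp0 hp (mul_ne_zero hu hv),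
    div_mul_eq_div_div_swap, theta_div_left hp0 hp (div_ne_zero hu hv)]
  field_simp

lemma efun_div_efun_mul_left {p t : ℂ} (hp0 : p ≠ 0) (hp : ‖p‖ < 1) (z y' : ℂ)
    {x y : ℂ} (hx : x ≠ 0) (hy : y ≠ 0) :
    efun p t z y' / efun p t (p * x) y = p * x ^ 2 * (efun p t z y' / efun p t x y) := by
  rw [efun_mul_left hp0 hp hx hy, div_mul_eq_div_div, div_inv_eq_mul, mul_comm, mul_div_assoc]

lemma efun_div_efun_mul_right {p t : ℂ} (hp0 : p ≠ 0) (hp : ‖p‖ < 1) {z x y : ℂ}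
    (hz : z ≠ 0) (hx : x ≠ 0) (hy : y ≠ 0) :
    efun p t z (p * y) / efun p t x (p * y) = efun p t z y / efun p t x y := by
  rw [efun_mul_right hp0 hp hz hy, efun_mul_right hp0 hp hx hy,
    mul_div_mul_left _ _ (inv_ne_zero (mul_ne_zero hp0 (pow_ne_zero 2 hy)))]

def shiftFactor (p t c : ℂ) (m : ℕ) : ℂ := ∏ j ∈ range m, p * (t ^ j * c) ^ 2

lemma shiftFactor_ne_zero {p t c : ℂ} (hp0 : p ≠ 0) (ht0 : t ≠ 0) (hc : c ≠ 0) (m : ℕ) :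
    shiftFactor p t c m ≠ 0 :=
  prod_ne_zero_iff.2 fun _ _ => mul_ne_zero hp0 (pow_ne_zero 2 (mul_ne_zero (pow_ne_zero _ ht0) hc))

lemma efunFac_mul_left {p t : ℂ} (hp0 : p ≠ 0) (hp : ‖p‖ < 1) (ht0 : t ≠ 0) {c v : ℂ}
    (hc : c ≠ 0) (hv : v ≠ 0) (m : ℕ) :
    efunFac p t (p * c) v m = (shiftFactor p t c m)⁻¹ * efunFac p t c v m := by
  rw [efunFac, efunFac, shiftFactor, ← prod_inv_distrib, ← prod_mul_distrib]
  refine prod_congr rfl fun j _ => ?_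
  rw [mul_left_comm, efun_mul_left hp0 hp (mul_ne_zero (pow_ne_zero j ht0) hc) hv]

lemma prod_prod_efunFac_update_mul {p t : ℂ} (hp0 : p ≠ 0) (hp : ‖p‖ < 1) (ht0 : t ≠ 0)
    {s m : ℕ} {a : Fin s → ℂ} (ha : ∀ k, a k ≠ 0) {w : Fin m → ℂ} (hw : ∀ l, w l ≠ 0)
    (μ : Fin s → ℕ) (k : Fin s) :
    ∏ k', ∏ l, efunFac p t (Function.update a k (p * a k) k') (w l) (μ k')
      = (shiftFactor p t (a k) (μ k))⁻¹ ^ m * ∏ k', ∏ l, efunFac p t (a k') (w l) (μ k') := by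
  rw [← mul_prod_erase univ _ (mem_univ k), ← mul_prod_erase univ _ (mem_univ k),
    Function.update_self, ← mul_assoc]
  congr 1
  · simp only [efunFac_mul_left hp0 hp ht0 (ha k) (hw _), prod_mul_distrib, prod_const,
      card_univ, Fintype.card_fin]
  · exact prod_congr rfl fun k' hk' => by rw [Function.update_of_ne (ne_of_mem_erase hk')]

section cnt

variable {n s : ℕ} (κ : Fin n → Fin s)

lemma cnt_succ (i : Fin n) (l : Fin s) :
    cnt κ (i + 1) l = cnt κ i l + if κ i = l then 1 else 0 := by
  have hsplit : univ.filter (fun j : Fin n => (j : ℕ) < i + 1 ∧ κ j = l)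
      = univ.filter (fun j : Fin n => (j : ℕ) < i ∧ κ j = l)
        ∪ univ.filter (fun j : Fin n => j = i ∧ κ j = l) := by
    ext j
    simp only [mem_union, mem_filter, mem_univ, true_and, Nat.lt_succ_iff_lt_or_eq, Fin.ext_iff]
    tauto
  rw [cnt, hsplit, card_union_of_disjoint, cnt]
  · congr 1
    rw [card_filter, Fintype.sum_eq_single i fun j hj => if_neg fun h => hj h.1]
    simp only [true_and]
  · exact disjoint_filter.2 fun j _ hj hj' => (Fin.ext_iff.not.2 hj.1.ne) hj'.1

lemma cnt_mono (l : Fin s) : Monotone fun m => cnt κ m l :=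
  fun _ _ h => card_le_card (monotone_filter_right _ fun _ _ hj => ⟨hj.1.trans_le h, hj.2⟩)

lemma cnt_lt_cnt {i : Fin n} {m : ℕ} (hi : (i : ℕ) < m) {l : Fin s} (hl : κ i = l) :
    cnt κ i l < cnt κ m l :=
  calc cnt κ i l < cnt κ (i + 1) l := by rw [cnt_succ, if_pos hl]; omega
    _ ≤ cnt κ m l := cnt_mono κ l hi

lemma cnt_eq_card (l : Fin s) : cnt κ n l = #(univ.filter fun j => κ j = l) := by
  simp only [cnt, Fin.is_lt, true_and]

lemma prod_ite_cnt {M : Type*} [CommMonoid M] (l : Fin s) (g : ℕ → M) :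
    ∏ i, (if κ i = l then g (cnt κ i l) else 1) = ∏ j ∈ range (cnt κ n l), g j := by
  have hinj : Set.InjOn (fun i : Fin n => cnt κ i l) (univ.filter fun i => κ i = l) := by
    intro i hi j hj hij
    simp only [coe_filter, mem_univ, true_and, Set.mem_ofPred_eq] at hi hj
    by_contra hne
    rcases Fin.lt_or_lt_of_ne hne with h | h
    · exact (cnt_lt_cnt κ h hi).ne hij
    · exact (cnt_lt_cnt κ h hj).ne hij.symm
  have himage : (univ.filter fun i => κ i = l).image (fun i : Fin n => cnt κ i l)
      = range (cnt κ n l) := by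
    refine eq_of_subset_of_card_le (fun j hj => ?_) ?_
    · obtain ⟨i, hi, rfl⟩ := mem_image.1 hj
      exact mem_range.2 (cnt_lt_cnt κ i.is_lt (mem_filter.1 hi).2)
    · rw [card_range, card_image_of_injOn hinj, cnt_eq_card]
  rw [← prod_filter, ← himage, prod_image hinj]

end cnt

def interpFactor (p t : ℂ) {s n : ℕ} (c : Fin s → ℂ) (z : Fin n → ℂ) (κ : Fin n → Fin s)
    (i : Fin n) (l : Fin s) : ℂ :=
  efun p t (z i) (t ^ cnt κ ((i : ℕ) + 1) l * c l) /
    efun p t (t ^ cnt κ (i : ℕ) (κ i) * c (κ i)) (t ^ cnt κ (i : ℕ) l * c l)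

lemma interpE_eq_sum (p t : ℂ) {s n : ℕ} (c : Fin s → ℂ) (z : Fin n → ℂ) (μ : Fin s → ℕ) :
    interpE p t c z μ = ∑ κ : Fin n → Fin s,
      if ∀ l, cnt κ n l = μ l then ∏ i, ∏ l ∈ univ.filter (· ≠ κ i), interpFactor p t c z κ i l
      else 0 :=
  rfl

lemma interpFactor_update_mul {p t : ℂ} (hp0 : p ≠ 0) (hp : ‖p‖ < 1) (ht0 : t ≠ 0) {s n : ℕ}
    {a : Fin s → ℂ} (ha : ∀ k, a k ≠ 0) {z : Fin n → ℂ} (hz : ∀ i, z i ≠ 0)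
    (κ : Fin n → Fin s) (k : Fin s) (i : Fin n) {l : Fin s} (hl : l ≠ κ i) :
    interpFactor p t (Function.update a k (p * a k)) z κ i l
      = (if κ i = k then p * (t ^ cnt κ i k * a k) ^ 2 else 1) * interpFactor p t a z κ i l := by
  have hta (m : ℕ) (j : Fin s) : t ^ m * a j ≠ 0 := mul_ne_zero (pow_ne_zero m ht0) (ha j)
  unfold interpFactor
  by_cases hik : κ i = k
  · subst hik
    rw [if_pos rfl, Function.update_of_ne hl, Function.update_self, mul_left_comm,
      efun_div_efun_mul_left hp0 hp _ _ (hta _ _) (hta _ _)]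
  · rw [if_neg hik, one_mul, Function.update_of_ne hik]
    by_cases hlk : l = k
    · subst hlk
      rw [Function.update_self, cnt_succ, if_neg hik, add_zero, mul_left_comm,
        efun_div_efun_mul_right hp0 hp (hz i) (hta _ _) (hta _ _)]
    · rw [Function.update_of_ne hlk]

lemma interpE_update_mul {p t : ℂ} (hp0 : p ≠ 0) (hp : ‖p‖ < 1) (ht0 : t ≠ 0) {s n : ℕ}
    {a : Fin s → ℂ} (ha : ∀ k, a k ≠ 0) {z : Fin n → ℂ} (hz : ∀ i, z i ≠ 0)
    (μ : Fin s → ℕ) (k : Fin s) :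
    interpE p t (Function.update a k (p * a k)) z μ
      = shiftFactor p t (a k) (μ k) ^ (s - 1) * interpE p t a z μ := by
  rw [interpE_eq_sum, interpE_eq_sum, mul_sum]
  refine sum_congr rfl fun κ _ => ?_
  split_ifs with hμ
  · have hcard (i : Fin n) : #(univ.filter (· ≠ κ i)) = s - 1 := by
      rw [filter_ne', card_erase_of_mem (mem_univ _), card_univ, Fintype.card_fin]
    simp only [prod_congr rfl fun i _ => prod_congr rfl fun l hl =>
        interpFactor_update_mul hp0 hp ht0 ha hz κ k i (mem_filter.1 hl).2,
      prod_mul_distrib, prod_const, hcard, prod_pow]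
    rw [prod_ite_cnt κ k fun j => p * (t ^ j * a k) ^ 2, hμ k, shiftFactor]
  · rw [mul_zero]

theorem fmu_param_pshift_invariant_general (p t : ℂ) (hp0 : p ≠ 0) (hp : ‖p‖ < 1)
    (ht0 : t ≠ 0) (r' n : ℕ) (μ : Zidx (r' + 1) n)
    (a : Fin (r' + 1) → ℂ) (ha : ∀ k, a k ≠ 0)
    (w : Fin r' → ℂ) (hw : ∀ l, w l ≠ 0)
    (k : Fin (r' + 1))
    (z : Fin n → ℂ) (hz : ∀ i, z i ≠ 0) :
    interpE p t (Function.update a k (p * a k)) z μ.1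
      * ∏ k' : Fin (r' + 1), ∏ l : Fin r',
          efunFac p t (Function.update a k (p * a k) k') (w l) (μ.1 k')
    = interpE p t a z μ.1
      * ∏ k' : Fin (r' + 1), ∏ l : Fin r', efunFac p t (a k') (w l) (μ.1 k') := by
  have hS := pow_ne_zero r' (shiftFactor_ne_zero hp0 ht0 (ha k) (μ.1 k))
  rw [interpE_update_mul hp0 hp ht0 ha hz, prod_prod_efunFac_update_mul hp0 hp ht0 ha hw,
    Nat.add_sub_cancel, inv_pow, mul_mul_mul_comm, mul_inv_cancel₀ hS, one_mul]

/-- Lemma 4.2: the functions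
`f_μ(z;w;p) = E_μ(a;z;p) F_μ(a;w;p)` are invariant under `p`-shifts of the parameters
`a_k` (here `r = r'+1`). -/
theorem fmu_param_pshift_invariant (p t : ℂ) (hp0 : p ≠ 0) (hp : ‖p‖ < 1)
    (ht0 : t ≠ 0) (r' n : ℕ) (hn : 1 ≤ n) (μ : Zidx (r' + 1) n)
    (a : Fin (r' + 1) → ℂ) (ha : ∀ k, a k ≠ 0)
    (w : Fin r' → ℂ) (hw : ∀ l, w l ≠ 0)
    (hgen : ∀ α β : ℕ, α ≤ n → β ≤ n → ∀ i j : Fin (r' + 1), i ≠ j →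
      efun p t (t ^ α * a i) (t ^ β * a j) ≠ 0)
    (k : Fin (r' + 1))
    (hgen' : ∀ α β : ℕ, α ≤ n → β ≤ n → ∀ i j : Fin (r' + 1), i ≠ j →
      efun p t (t ^ α * Function.update a k (p * a k) i)
        (t ^ β * Function.update a k (p * a k) j) ≠ 0)
    (z : Fin n → ℂ) (hz : ∀ i, z i ≠ 0) :
    interpE p t (Function.update a k (p * a k)) z μ.1
      * ∏ k' : Fin (r' + 1), ∏ l : Fin r',
          efunFac p t (Function.update a k (p * a k) k') (w l) (μ.1 k')
    = interpE p t a z μ.1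
      * ∏ k' : Fin (r' + 1), ∏ l : Fin r', efunFac p t (a k') (w l) (μ.1 k') :=
  fmu_param_pshift_invariant_general p t hp0 hp ht0 r' n μ a ha w hw k z hz
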